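/- Belief MDP value dominance: for a POMDP M with target states T carrying unique observation z^T, and for any FSC F for M, the value P^{M^F}(◇(T×N)) of F on M is at most the maximal reachability probability P_max^{M^B}(◇T^B) of target beliefs in the belief MDP from the initial belief {s0 ↦ 1}. -/

import Mathlib

open scoped ENNReal Classical

/-- Probability `P(b,α,z')` of observing `z'` after taking action `a` in belief `b`. -/
noncomputable def obsProb {S A Z : Type*} (P : S → A → S → ℝ≥0∞) (O : S → Z)
    (b : S → ℝ≥0∞) (a : A) (z' : Z) : ℝ≥0∞ :=
  ∑' s, b s * ∑' s', (if O s' = z' then P s a s' else 0)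

/-- Bayesian belief update `⟦b,α,z'⟧`. -/
noncomputable def beliefUpdate {S A Z : Type*} (P : S → A → S → ℝ≥0∞) (O : S → Z)
    (b : S → ℝ≥0∞) (a : A) (z' : Z) : S → ℝ≥0∞ :=
  fun s' => if O s' = z' then (∑' s, b s * P s a s') / obsProb P O b a z' else 0

/-- A belief is a target belief iff it is supported on states with the target observation. -/
def targetBelief {S Z : Type*} (O : S → Z) (zT : Z) (b : S → ℝ≥0∞) : Prop :=
  ∀ s, b s ≠ 0 → O s = zT

/-- `n`-step maximal reachability of target beliefs in the belief MDP (value iteration). -/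
noncomputable def beliefMaxReachN {S A Z : Type*} [Fintype Z]
    (P : S → A → S → ℝ≥0∞) (O : S → Z) (zT : Z) : ℕ → (S → ℝ≥0∞) → ℝ≥0∞
  | 0, b => if targetBelief O zT b then 1 else 0
  | n + 1, b => if targetBelief O zT b then 1 else
      ⨆ a, ∑ z' : Z, obsProb P O b a z' *
        beliefMaxReachN P O zT n (beliefUpdate P O b a z')

/-- Maximal reachability probability of target beliefs in the belief MDP. -/
noncomputable def beliefMaxReach {S A Z : Type*} [Fintype Z]
    (P : S → A → S → ℝ≥0∞) (O : S → Z) (zT : Z) (b : S → ℝ≥0∞) : ℝ≥0∞ :=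
  ⨆ n, beliefMaxReachN P O zT n b

/-- `n`-step reachability probability of `T` in a Markov chain. -/
noncomputable def mcReachN {St : Type*} (Q : St → St → ℝ≥0∞) (T : Set St) :
    ℕ → St → ℝ≥0∞
  | 0, s => if s ∈ T then 1 else 0
  | n + 1, s => if s ∈ T then 1 else ∑' s', Q s s' * mcReachN Q T n s'

/-- Reachability probability of `T` in a Markov chain. -/
noncomputable def mcReach {St : Type*} (Q : St → St → ℝ≥0∞) (T : Set St) (s : St) : ℝ≥0∞ :=
  ⨆ n, mcReachN Q T n s

/-- Transition matrix of the MC induced on a POMDP by an FSC `(γ, δ)`. -/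
noncomputable def inducedQ {S A Z N : Type*} (P : S → A → S → ℝ≥0∞) (O : S → Z)
    (γ : N → Z → A) (δ : N → Z → Z → N) : (S × N) → (S × N) → ℝ≥0∞ :=
  fun p q =>
    (if q.2 = δ p.2 (O p.1) (O q.1) then (1 : ℝ≥0∞) else 0) * P p.1 (γ p.2 (O p.1)) q.1

/- A finite-memory controller only sees the observation sequence, and the belief is a sufficient
statistic for it.  By induction on the horizon, for any sub-probability belief `b` concentrated on
a single observation `z` and any controller node `n`, the `b`-average of the `k`-step value of the
induced chain is at most the `k`-step belief-MDP value of `b`: the controller plays the single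
action `γ n z` on all of `b`, and Bayes' rule, splitting the successors by their observation `z'`,
turns the average into a mixture, with weights the observation probabilities, of averages over the
updated beliefs, each concentrated on the single observation `z'`. -/

section MarkovChain

variable {St : Type*} (Q : St → St → ℝ≥0∞) (T : Set St)

lemma mcReachN_le_one (hQ : ∀ s, ∑' s', Q s s' ≤ 1) (k : ℕ) (s : St) :
    mcReachN Q T k s ≤ 1 := by
  induction k generalizing s with
  | zero => simp only [mcReachN]; split_ifs <;> simp
  | succ k ih =>
    simp only [mcReachN]
    split_ifs
    · exact le_rfl
    · calc ∑' s', Q s s' * mcReachN Q T k s' ≤ ∑' s', Q s s' :=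
            ENNReal.tsum_le_tsum fun s' => mul_le_of_le_one_right' (ih s')
        _ ≤ 1 := hQ s

end MarkovChain

lemma tsum_eq_sum_tsum_ite_eq {S Z : Type*} [Fintype Z] (O : S → Z) (g : S → Z → ℝ≥0∞) :
    ∑' s, g s (O s) = ∑ z, ∑' s, if O s = z then g s z else 0 := by
  rw [← Summable.tsum_finsetSum fun _ _ => ENNReal.summable]
  exact tsum_congr fun s => by simp [Finset.sum_ite_eq]

section Belief

variable {S A Z : Type*} (P : S → A → S → ℝ≥0∞) (O : S → Z)

section Update

variable (b : S → ℝ≥0∞) (a : A) (z' : Z)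

lemma obsProb_eq_tsum :
    obsProb P O b a z' = ∑' s', if O s' = z' then ∑' s, b s * P s a s' else 0 := by
  simp_rw [obsProb, ← ENNReal.tsum_mul_left]
  rw [ENNReal.tsum_comm]
  exact tsum_congr fun s' => by split_ifs <;> simp

lemma obsProb_le_one (hP : ∀ s a, ∑' s', P s a s' ≤ 1) (hb : ∑' s, b s ≤ 1) :
    obsProb P O b a z' ≤ 1 :=
  calc obsProb P O b a z' ≤ ∑' s, b s * ∑' s', P s a s' :=
        ENNReal.tsum_le_tsum fun s => by
          gcongr with s'
          split_ifs <;> simp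
    _ ≤ ∑' s, b s := ENNReal.tsum_le_tsum fun s => mul_le_of_le_one_right' (hP s a)
    _ ≤ 1 := hb

lemma obsProb_mul_beliefUpdate (hfin : obsProb P O b a z' ≠ ⊤) (s' : S) :
    obsProb P O b a z' * beliefUpdate P O b a z' s'
      = if O s' = z' then ∑' s, b s * P s a s' else 0 := by
  simp only [beliefUpdate]
  split_ifs with hs'
  · rcases eq_or_ne (obsProb P O b a z') 0 with h0 | h0
    · -- the mass reaching `s'` is one of the summands of the vanishing observation probability
      have hle := ENNReal.le_tsum
        (f := fun s' => if O s' = z' then ∑' s, b s * P s a s' else 0) s'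
      rw [← obsProb_eq_tsum, h0, if_pos hs', nonpos_iff_eq_zero] at hle
      simp [h0, hle]
    · exact ENNReal.mul_div_cancel h0 hfin
  · exact mul_zero _

lemma tsum_beliefUpdate_le_one : ∑' s', beliefUpdate P O b a z' s' ≤ 1 := by
  have hdiv : ∀ s', beliefUpdate P O b a z' s'
      = (if O s' = z' then ∑' s, b s * P s a s' else 0) * (obsProb P O b a z')⁻¹ := by
    intro s'
    simp only [beliefUpdate, div_eq_mul_inv]
    split_ifs <;> simp
  simp_rw [hdiv, ENNReal.tsum_mul_right, ← obsProb_eq_tsum, ← div_eq_mul_inv]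
  exact ENNReal.div_self_le_one

lemma obs_eq_of_beliefUpdate_ne_zero {s' : S} (h : beliefUpdate P O b a z' s' ≠ 0) : O s' = z' := by
  by_contra hs'
  exact h (if_neg hs')

/-- Bayes' rule, summed over the next observation. -/
lemma tsum_mul_tsum_eq_sum_obsProb_mul [Fintype Z] (hfin : ∀ z', obsProb P O b a z' ≠ ⊤)
    (f : S → Z → ℝ≥0∞) :
    ∑' s, b s * ∑' s', P s a s' * f s' (O s')
      = ∑ z', obsProb P O b a z' * ∑' s', beliefUpdate P O b a z' s' * f s' z' :=
  calc ∑' s, b s * ∑' s', P s a s' * f s' (O s')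
      = ∑' s', (∑' s, b s * P s a s') * f s' (O s') := by
        simp_rw [← ENNReal.tsum_mul_left, ← ENNReal.tsum_mul_right, mul_assoc]
        exact ENNReal.tsum_comm
    _ = ∑ z', ∑' s', if O s' = z' then (∑' s, b s * P s a s') * f s' z' else 0 :=
        tsum_eq_sum_tsum_ite_eq O fun s' z' => (∑' s, b s * P s a s') * f s' z'
    _ = ∑ z', obsProb P O b a z' * ∑' s', beliefUpdate P O b a z' s' * f s' z' := by
        refine Finset.sum_congr rfl fun z' _ => ?_
        simp_rw [← ENNReal.tsum_mul_left, ← mul_assoc,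
          obsProb_mul_beliefUpdate P O b a z' (hfin z'), ite_mul, zero_mul]

end Update

variable (zT : Z)

lemma notMem_of_not_targetBelief {T : Set S} (hT : ∀ s, s ∈ T ↔ O s = zT)
    {b : S → ℝ≥0∞} {z : Z} (hbz : ∀ s, b s ≠ 0 → O s = z) (htb : ¬targetBelief O zT b)
    {s : S} (hs : b s ≠ 0) : s ∉ T := fun hsT =>
  htb fun s' hs' => (hbz s' hs').trans ((hbz s hs).symm.trans ((hT s).1 hsT))

lemma beliefMaxReachN_of_targetBelief [Fintype Z] {b : S → ℝ≥0∞} (hb : targetBelief O zT b)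
    (k : ℕ) : beliefMaxReachN P O zT k b = 1 := by
  cases k <;> simp [beliefMaxReachN, hb]

end Belief

section Controller

variable {S A Z N : Type*} (P : S → A → S → ℝ≥0∞) (O : S → Z)
  (γ : N → Z → A) (δ : N → Z → Z → N)

lemma tsum_inducedQ_mul (p : S × N) (f : S × N → ℝ≥0∞) :
    ∑' q, inducedQ P O γ δ p q * f q
      = ∑' s', P p.1 (γ p.2 (O p.1)) s' * f (s', δ p.2 (O p.1) (O s')) := by
  rw [ENNReal.tsum_prod (f := fun s' n' => inducedQ P O γ δ p (s', n') * f (s', n'))]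
  refine tsum_congr fun s' => ?_
  rw [tsum_eq_single (δ p.2 (O p.1) (O s'))]
  · simp [inducedQ]
  · intro n' hn'
    simp [inducedQ, hn']

lemma tsum_inducedQ (hP : ∀ s a, ∑' s', P s a s' = 1) (p : S × N) :
    ∑' q, inducedQ P O γ δ p q = 1 := by
  simpa [hP] using tsum_inducedQ_mul P O γ δ p 1

lemma tsum_mul_mcReachN_le_beliefMaxReachN_of_targetBelief [Fintype Z]
    (hP : ∀ s a, ∑' s', P s a s' = 1) (T : Set S) (zT : Z) (k : ℕ) (b : S → ℝ≥0∞) (n : N)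
    (hb : ∑' s, b s ≤ 1) (htb : targetBelief O zT b) :
    ∑' s, b s * mcReachN (inducedQ P O γ δ) {p | p.1 ∈ T} k (s, n)
      ≤ beliefMaxReachN P O zT k b :=
  calc ∑' s, b s * mcReachN (inducedQ P O γ δ) {p | p.1 ∈ T} k (s, n) ≤ ∑' s, b s :=
        ENNReal.tsum_le_tsum fun _ => mul_le_of_le_one_right'
          (mcReachN_le_one _ _ (fun p => (tsum_inducedQ P O γ δ hP p).le) k _)
    _ ≤ 1 := hb
    _ = beliefMaxReachN P O zT k b := (beliefMaxReachN_of_targetBelief P O zT htb k).symm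

lemma tsum_mul_mcReachN_le_beliefMaxReachN [Fintype Z] (hP : ∀ s a, ∑' s', P s a s' = 1)
    (T : Set S) (zT : Z) (hT : ∀ s, s ∈ T ↔ O s = zT) (k : ℕ) (b : S → ℝ≥0∞) (n : N) (z : Z)
    (hb : ∑' s, b s ≤ 1) (hbz : ∀ s, b s ≠ 0 → O s = z) :
    ∑' s, b s * mcReachN (inducedQ P O γ δ) {p | p.1 ∈ T} k (s, n)
      ≤ beliefMaxReachN P O zT k b := by
  induction k generalizing b n z with
  | zero =>
    by_cases htb : targetBelief O zT b
    · exact tsum_mul_mcReachN_le_beliefMaxReachN_of_targetBelief P O γ δ hP T zT 0 b n hb htb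
    have hnotT : ∀ s, b s ≠ 0 → s ∉ T := fun _ =>
      notMem_of_not_targetBelief O zT hT hbz htb
    simp only [beliefMaxReachN, if_neg htb]
    refine le_of_eq (ENNReal.tsum_eq_zero.2 fun s => ?_)
    rcases eq_or_ne (b s) 0 with h | h
    · simp [h]
    · simp [mcReachN, hnotT s h]
  | succ k ih =>
    by_cases htb : targetBelief O zT b
    · exact tsum_mul_mcReachN_le_beliefMaxReachN_of_targetBelief P O γ δ hP T zT
        (k + 1) b n hb htb
    have hnotT : ∀ s, b s ≠ 0 → s ∉ T := fun _ =>
      notMem_of_not_targetBelief O zT hT hbz htb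
    have hfin : ∀ z', obsProb P O b (γ n z) z' ≠ ⊤ := fun z' =>
      ne_top_of_le_ne_top ENNReal.one_ne_top
        (obsProb_le_one P O b _ z' (fun s a => (hP s a).le) hb)
    calc ∑' s, b s * mcReachN (inducedQ P O γ δ) {p | p.1 ∈ T} (k + 1) (s, n)
        = ∑' s, b s * ∑' s', P s (γ n z) s'
            * mcReachN (inducedQ P O γ δ) {p | p.1 ∈ T} k (s', δ n z (O s')) := by
          refine tsum_congr fun s => ?_
          rcases eq_or_ne (b s) 0 with h | h
          · simp [h]
          · rw [mcReachN, if_neg (show (s, n) ∉ {p : S × N | p.1 ∈ T} from hnotT s h),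
              tsum_inducedQ_mul, hbz s h]
      _ = ∑ z', obsProb P O b (γ n z) z' * ∑' s', beliefUpdate P O b (γ n z) z' s'
            * mcReachN (inducedQ P O γ δ) {p | p.1 ∈ T} k (s', δ n z z') :=
          tsum_mul_tsum_eq_sum_obsProb_mul P O b _ hfin fun s' z' =>
            mcReachN (inducedQ P O γ δ) {p | p.1 ∈ T} k (s', δ n z z')
      _ ≤ ∑ z', obsProb P O b (γ n z) z'
            * beliefMaxReachN P O zT k (beliefUpdate P O b (γ n z) z') := by
          gcongr with z'
          exact ih _ _ z' (tsum_beliefUpdate_le_one P O b _ z')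
            fun s' => obs_eq_of_beliefUpdate_ne_zero P O b _ z'
      _ ≤ beliefMaxReachN P O zT (k + 1) b := by
          rw [beliefMaxReachN, if_neg htb]
          exact le_iSup (fun a => ∑ z', obsProb P O b a z'
            * beliefMaxReachN P O zT k (beliefUpdate P O b a z')) (γ n z)

end Controller

theorem fsc_value_le_belief_optimum_general
    {S A Z N : Type*} [Fintype Z]
    (P : S → A → S → ℝ≥0∞) (hP : ∀ s a, ∑' s', P s a s' = 1)
    (O : S → Z) (s0 : S) (T : Set S) (zT : Z)
    (hT : ∀ s, s ∈ T ↔ O s = zT)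
    (γ : N → Z → A) (δ : N → Z → Z → N) (n0 : N) :
    mcReach (inducedQ P O γ δ) {p : S × N | p.1 ∈ T} (s0, n0)
      ≤ beliefMaxReach (A := A) P O zT (fun s => if s = s0 then 1 else 0) := by
  refine iSup_le fun k => le_iSup_of_le k ?_
  have hDirac := tsum_mul_mcReachN_le_beliefMaxReachN P O γ δ hP T zT hT k
    (fun s => if s = s0 then 1 else 0) n0 (O s0) (by simp [tsum_ite_eq])
    (fun s hs => by by_cases h : s = s0 <;> simp_all)
  simpa [ite_mul, tsum_ite_eq] using hDirac

/-- belief MDP value dominance.  For any FSC `F = (N, n0, γ, δ)` for a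
POMDP with absorbing targets `T` carrying the unique observation `zT`, the value
`P^{M^F}(◇(T×N))` from `(s0, n0)` is at most the maximal reachability probability of
target beliefs in the belief MDP from the initial belief `{s0 ↦ 1}`. -/
theorem fsc_value_le_belief_optimum
    {S A Z N : Type*} [Fintype Z]
    (P : S → A → S → ℝ≥0∞) (hP : ∀ s a, ∑' s', P s a s' = 1)
    (O : S → Z) (s0 : S) (T : Set S) (zT : Z)
    (hT : ∀ s, s ∈ T ↔ O s = zT)
    (habs : ∀ s ∈ T, ∀ a s', P s a s' = if s' = s then 1 else 0)
    (γ : N → Z → A) (δ : N → Z → Z → N) (n0 : N) :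
    mcReach (inducedQ P O γ δ) {p : S × N | p.1 ∈ T} (s0, n0)
      ≤ beliefMaxReach (A := A) P O zT (fun s => if s = s0 then 1 else 0) :=
  fsc_value_le_belief_optimum_general P hP O s0 T zT hT γ δ n0
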